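/- For every ε > 0 there exists N such that for all even n ≥ N, if p ≤ (1 - ε) log n / (2 n²) then the probability that the random 3-uniform hypergraph H_{n,p;3} has no isolated vertex is at most ε; consequently the probability that H_{n,p;3} contains a loose Hamilton cycle tends to 0 as n → ∞ along even n. -/

import Mathlib

open MeasureTheory Filter
open scoped ProbabilityTheory

/-- The triples (3-element subsets) of `[n]`. -/
def Triple (n : ℕ) : Type := {e : Finset (Fin n) // e.card = 3}

instance (n : ℕ) : Fintype (Triple n) := by unfold Triple; infer_instance

/-- The random 3-uniform hypergraph `H_{n,p;3}`: each triple of `[n]` is an edge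
independently with probability `p`. -/
noncomputable def hypergraphMeasure (n : ℕ) (p : ENNReal) (hp : p ≤ 1) :
    Measure (Triple n → Bool) :=
  MeasureTheory.Measure.pi fun _ => (PMF.bernoulli p.toNNReal (by simpa using ENNReal.toNNReal_mono ENNReal.one_ne_top hp)).toMeasure

/-- The event that no vertex of `[n]` is isolated. -/
def NoIsolated (n : ℕ) : Set (Triple n → Bool) :=
  {ω | ∀ v : Fin n, ∃ e : Triple n, v ∈ e.1 ∧ ω e = true}

instance (n : ℕ) : Finite (Triple n) := by unfold Triple; infer_instance
instance (n : ℕ) : DecidableEq (Triple n) := by unfold Triple; infer_instance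

lemma measAll {n : ℕ} (s : Set (Triple n → Bool)) : MeasurableSet s :=
  s.toFinite.measurableSet

instance (n : ℕ) (p : ENNReal) (hp : p ≤ 1) :
    IsProbabilityMeasure (hypergraphMeasure n p hp) := by
  unfold hypergraphMeasure; infer_instance

lemma cyl {n : ℕ} {p : ENNReal} (hp : p ≤ 1) (S : Finset (Triple n)) :
    hypergraphMeasure n p hp {ω | ∀ e ∈ S, ω e = false} = (1 - p) ^ S.card := by
  have hset : {ω : Triple n → Bool | ∀ e ∈ S, ω e = false}
      = Set.pi Set.univ (fun e => if e ∈ S then ({false} : Set Bool) else Set.univ) := by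
    ext ω
    simp only [Set.mem_setOf_eq, Set.mem_pi, Set.mem_univ, forall_true_left]
    constructor
    · intro h e; by_cases he : e ∈ S <;> simp [he, h e]
    · intro h e he; have := h e; simpa [he] using this
  rw [hypergraphMeasure, hset, Measure.pi_pi]
  have hfac : ∀ e : Triple n,
      (PMF.bernoulli p.toNNReal (by simpa using ENNReal.toNNReal_mono ENNReal.one_ne_top hp)).toMeasure (if e ∈ S then ({false} : Set Bool) else Set.univ)
      = if e ∈ S then (1 - p) else 1 := by
    intro e
    by_cases he : e ∈ S <;> simp only [he, if_true, if_false]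
    · rw [PMF.toMeasure_apply_singleton _ _ (measurableSet_singleton _)]
      erw [PMF.bernoulli_apply]
      show ((1 - p.toNNReal : NNReal) : ENNReal) = 1 - p
      rw [ENNReal.coe_sub, ENNReal.coe_one, ENNReal.coe_toNNReal (ne_top_of_le_ne_top ENNReal.one_ne_top hp)]
    · exact measure_univ
  simp_rw [hfac]
  rw [Finset.prod_ite_mem, Finset.univ_inter, Finset.prod_const]

def Tv (n : ℕ) (v : Fin n) : Finset (Triple n) := Finset.univ.filter (fun e => v ∈ e.1)

lemma mem_Tv {n : ℕ} {v : Fin n} {e : Triple n} : e ∈ Tv n v ↔ v ∈ e.1 := by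
  simp [Tv]

lemma card_Tv_le {n : ℕ} (v : Fin n) : (Tv n v).card ≤ n ^ 2 := by
  have h1 : (Tv n v).card ≤ ((Finset.univ : Finset (Fin n)).powersetCard 2).card := by
    apply Finset.card_le_card_of_injOn (fun e => e.1.erase v)
    · intro e he
      simp only [Finset.mem_coe, Finset.mem_powersetCard]
      refine ⟨Finset.subset_univ _, ?_⟩
      rw [Finset.card_erase_of_mem (mem_Tv.1 he), e.2]
    · intro e1 h1 e2 h2 h
      apply Subtype.ext
      rw [← Finset.insert_erase (mem_Tv.1 h1), ← Finset.insert_erase (mem_Tv.1 h2)]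
      exact congrArg (insert v) h
  rw [Finset.card_powersetCard, Finset.card_univ, Fintype.card_fin, Nat.choose_two_right] at h1
  calc (Tv n v).card ≤ n * (n - 1) / 2 := h1
    _ ≤ n * n := (Nat.div_le_self _ _).trans (Nat.mul_le_mul_left n (Nat.sub_le _ _))
    _ = n ^ 2 := (sq n).symm

lemma card_Tv_inter_le {n : ℕ} {u v : Fin n} (huv : u ≠ v) :
    (Tv n u ∩ Tv n v).card ≤ n := by
  have h1 : (Tv n u ∩ Tv n v).card ≤ ((Finset.univ : Finset (Fin n)).powersetCard 1).card := by
    apply Finset.card_le_card_of_injOn (fun e => (e.1.erase u).erase v)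
    · intro e he
      rw [Finset.mem_coe, Finset.mem_inter, mem_Tv, mem_Tv] at he
      simp only [Finset.mem_coe, Finset.mem_powersetCard]
      refine ⟨Finset.subset_univ _, ?_⟩
      rw [Finset.card_erase_of_mem (Finset.mem_erase.2 ⟨Ne.symm huv, he.2⟩),
        Finset.card_erase_of_mem he.1, e.2]
    · intro e1 h1 e2 h2 h
      rw [Finset.coe_inter, Set.mem_inter_iff, Finset.mem_coe, Finset.mem_coe,
        mem_Tv, mem_Tv] at h1 h2
      apply Subtype.ext
      rw [← Finset.insert_erase h1.1, ← Finset.insert_erase (Finset.mem_erase.2 ⟨Ne.symm huv, h1.2⟩),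
        ← Finset.insert_erase h2.1, ← Finset.insert_erase (Finset.mem_erase.2 ⟨Ne.symm huv, h2.2⟩)]
      exact congrArg (insert u) (congrArg (insert v) h)
  rw [Finset.card_powersetCard, Finset.card_univ, Fintype.card_fin, Nat.choose_one_right] at h1
  exact h1

/-- The event that `v` is isolated. -/
def Av (n : ℕ) (v : Fin n) : Set (Triple n → Bool) := {ω | ∀ e ∈ Tv n v, ω e = false}

lemma Av_inter {n : ℕ} (u v : Fin n) :
    Av n u ∩ Av n v = {ω | ∀ e ∈ Tv n u ∪ Tv n v, ω e = false} := by
  ext ω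
  simp only [Av, Set.mem_inter_iff, Set.mem_setOf_eq, Finset.mem_union]
  constructor
  · rintro ⟨h1, h2⟩ e (he | he)
    · exact h1 e he
    · exact h2 e he
  · intro h
    exact ⟨fun e he => h e (Or.inl he), fun e he => h e (Or.inr he)⟩

lemma exp_neg_two_le {x : ℝ} (h0 : 0 ≤ x) (h2 : x ≤ 1/2) : Real.exp (-(2*x)) ≤ 1 - x := by
  have h1 : 1 + 2*x ≤ Real.exp (2*x) := by linarith [Real.add_one_le_exp (2*x)]
  have hpos : (0:ℝ) < Real.exp (2*x) := Real.exp_pos _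
  have key : 1 ≤ (1 - x) * Real.exp (2*x) := by nlinarith
  rw [Real.exp_neg, inv_eq_one_div, div_le_iff₀ hpos]
  linarith

lemma arith_div {V a s eps : ℝ} (hapos : 0 < a) (hspos : 0 < s)
    (hV : V ≤ a + a^2/s - a^2) (hainv : 1/a ≤ eps/2) (hfrac : (1-s)/s ≤ eps/2) :
    V / a^2 ≤ eps := by
  rw [div_le_iff₀ (pow_pos hapos 2)]
  have e1 : a ≤ eps/2 * a^2 := by
    have h := mul_le_mul_of_nonneg_right hainv (sq_nonneg a)
    have h0 : 1/a * a^2 = a := by field_simp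
    rw [h0] at h
    linarith
  have e2 : a^2/s - a^2 ≤ eps/2 * a^2 := by
    have h := mul_le_mul_of_nonneg_right hfrac (sq_nonneg a)
    have h0 : (1-s)/s * a^2 = a^2/s - a^2 := by field_simp
    rw [h0] at h
    linarith
  nlinarith [e1, e2, hV]

lemma main_est (ε : ℝ) (hε : 0 < ε) (hε2 : ε ≤ 1/2) :
    ∃ N : ℕ, ∀ n ≥ N, ∀ (p : ENNReal) (hp : p ≤ 1),
      p ≤ ENNReal.ofReal ((1 - ε) * Real.log n / (2 * (n : ℝ) ^ 2)) →
      hypergraphMeasure n p hp (NoIsolated n) ≤ ENNReal.ofReal ε := by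
  have hev : ∀ᶠ n : ℕ in atTop,
      (1 ≤ n ∧ Real.exp (-(ε * Real.log n)) ≤ ε/2 ∧ Real.log n / n ≤ min (1/2) (3*ε/4)) := by
    have hlog : Tendsto (fun n : ℕ => Real.log n) atTop atTop :=
      Real.tendsto_log_atTop.comp tendsto_natCast_atTop_atTop
    have h2 : Tendsto (fun n : ℕ => Real.exp (-(ε * Real.log n))) atTop (nhds 0) := by
      apply Real.tendsto_exp_atBot.comp
      apply Filter.tendsto_neg_atBot_iff.2
      exact hlog.const_mul_atTop hε
    have h3 : Tendsto (fun n : ℕ => Real.log n / n) atTop (nhds 0) :=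
      Real.isLittleO_log_id_atTop.tendsto_div_nhds_zero.comp tendsto_natCast_atTop_atTop
    filter_upwards [eventually_ge_atTop 1,
      h2.eventually_le_const (by positivity : (0:ℝ) < ε/2),
      h3.eventually_le_const (by positivity : (0:ℝ) < min (1/2) (3*ε/4))] with n ha hb hc
    exact ⟨ha, hb, hc⟩
  obtain ⟨N, hN⟩ := eventually_atTop.1 hev
  refine ⟨N, fun n hn p hp hple => ?_⟩
  obtain ⟨hn1, hA, hB⟩ := hN n hn
  set μ := hypergraphMeasure n p hp with hμ
  have hn0 : (0:ℝ) < n := by exact_mod_cast hn1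
  have hlogn : (0:ℝ) ≤ Real.log n := Real.log_natCast_nonneg n
  have hbd0 : (0:ℝ) ≤ (1 - ε) * Real.log n / (2 * (n : ℝ) ^ 2) := by
    apply div_nonneg (mul_nonneg (by linarith) hlogn) (by positivity)
  set pr := p.toReal with hprdef
  have hpr0 : 0 ≤ pr := ENNReal.toReal_nonneg
  have hprle : pr ≤ (1 - ε) * Real.log n / (2 * (n : ℝ) ^ 2) :=
    ENNReal.toReal_le_of_le_ofReal hbd0 hple
  have key : 2 * pr * (n:ℝ)^2 ≤ (1 - ε) * Real.log n := by
    have := (le_div_iff₀ (by positivity : (0:ℝ) < 2 * (n:ℝ)^2)).1 hprle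
    linarith
  have hnpr : (n:ℝ) * pr ≤ Real.log n / (2 * n) := by
    rw [le_div_iff₀ (by positivity)]
    nlinarith [hlogn, hε.le]
  have hnpr4 : (n:ℝ) * pr ≤ 1/4 := by
    have h1 : Real.log n / (2*n) = (Real.log n / n) / 2 := by ring
    have h2 : Real.log n / n ≤ 1/2 := hB.trans (min_le_left _ _)
    rw [h1] at hnpr
    linarith
  have hprhalf : pr ≤ 1/2 := by
    nlinarith [hnpr4, hn0, hpr0, mul_le_mul_of_nonneg_right (show (1:ℝ) ≤ n from by exact_mod_cast hn1) hpr0]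
  have h1pr : (0:ℝ) < 1 - pr := by linarith
  -- real quantities
  set q : Fin n → ℝ := fun v => (1 - pr) ^ (Tv n v).card with hq
  set a : ℝ := ∑ v, q v with hadef
  set s : ℝ := (1 - pr) ^ n with hsdef
  have hqpos : ∀ v, 0 < q v := fun v => pow_pos h1pr _
  have hqle1 : ∀ v, q v ≤ 1 := fun v => pow_le_one₀ (by linarith) (by linarith)
  have hspos : (0:ℝ) < s := pow_pos h1pr _
  have hsle1 : s ≤ 1 := pow_le_one₀ (by linarith) (by linarith)
  -- lower bound for q v
  have hqlb : ∀ v, Real.exp (-((1-ε) * Real.log n)) ≤ q v := by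
    intro v
    have e1 : Real.exp (-((1-ε) * Real.log n)) ≤ Real.exp (-(2 * pr * (n:ℝ)^2)) :=
      Real.exp_le_exp.2 (by linarith)
    have e2 : Real.exp (-(2 * pr * (n:ℝ)^2)) = (Real.exp (-(2*pr))) ^ (n^2) := by
      rw [← Real.exp_nat_mul]
      congr 1
      push_cast
      ring
    have e3 : (Real.exp (-(2*pr))) ^ (n^2) ≤ (1 - pr) ^ (n^2) :=
      pow_le_pow_left₀ (Real.exp_nonneg _) (exp_neg_two_le hpr0 hprhalf) _
    have e4 : (1 - pr) ^ (n^2) ≤ (1 - pr) ^ (Tv n v).card :=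
      pow_le_pow_of_le_one (by linarith) (by linarith) (card_Tv_le v)
    calc Real.exp (-((1-ε) * Real.log n)) ≤ (Real.exp (-(2*pr))) ^ (n^2) := by rw [← e2]; exact e1
      _ ≤ (1 - pr) ^ (n^2) := e3
      _ ≤ q v := e4
  have halb : Real.exp (ε * Real.log n) ≤ a := by
    have h1 : (n:ℝ) * Real.exp (-((1-ε) * Real.log n)) ≤ a := by
      rw [hadef]
      calc (n:ℝ) * Real.exp (-((1-ε) * Real.log n))
          = ∑ _v : Fin n, Real.exp (-((1-ε) * Real.log n)) := by
            rw [Finset.sum_const, Finset.card_univ, Fintype.card_fin, nsmul_eq_mul]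
        _ ≤ ∑ v, q v := Finset.sum_le_sum fun v _ => hqlb v
    have h2 : (n:ℝ) = Real.exp (Real.log n) := (Real.exp_log hn0).symm
    calc Real.exp (ε * Real.log n) = Real.exp (Real.log n) * Real.exp (-((1-ε) * Real.log n)) := by
          rw [← Real.exp_add]; congr 1; ring
      _ = (n:ℝ) * Real.exp (-((1-ε) * Real.log n)) := by rw [← h2]
      _ ≤ a := h1
  have hapos : (0:ℝ) < a := lt_of_lt_of_le (Real.exp_pos _) halb
  have hainv : 1 / a ≤ ε / 2 := by
    calc 1/a ≤ 1/Real.exp (ε * Real.log n) := one_div_le_one_div_of_le (Real.exp_pos _) halb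
      _ = Real.exp (-(ε * Real.log n)) := by rw [Real.exp_neg, one_div]
      _ ≤ ε/2 := hA
  -- s bounds
  have hslb : 1 - (n:ℝ) * pr ≤ s := by
    have := one_add_mul_le_pow (show (-2:ℝ) ≤ -pr by linarith) n
    rw [hsdef]
    calc 1 - (n:ℝ)*pr = 1 + n * (-pr) := by ring
      _ ≤ (1 + (-pr)) ^ n := this
      _ = (1 - pr) ^ n := by rw [← sub_eq_add_neg]
  have hs34 : (3:ℝ)/4 ≤ s := by linarith
  have hfrac : (1 - s) / s ≤ ε / 2 := by
    have h1 : 1 - s ≤ (n:ℝ) * pr := by linarith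
    have h2 : (n:ℝ) * pr ≤ 3*ε/8 := by
      have h3 : Real.log n / (2*n) = (Real.log n / n) / 2 := by ring
      have h4 : Real.log n / n ≤ 3*ε/4 := hB.trans (min_le_right _ _)
      calc (n:ℝ) * pr ≤ Real.log n / (2*n) := hnpr
        _ = (Real.log n / n) / 2 := h3
        _ ≤ (3*ε/4)/2 := by linarith
        _ = 3*ε/8 := by ring
    calc (1 - s)/s ≤ (3*ε/8) / (3/4) :=
          div_le_div₀ (by positivity) (by linarith) (by norm_num) hs34
      _ = ε/2 := by ring
  -- measure computations
  have hmuAv : ∀ v, μ (Av n v) = (1 - p) ^ (Tv n v).card := fun v => cyl hp (Tv n v)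
  have htoReal : (1 - p).toReal = 1 - pr := by
    rw [ENNReal.toReal_sub_of_le hp ENNReal.one_ne_top, ENNReal.toReal_one]
  have hmuAvR : ∀ v, (μ (Av n v)).toReal = q v := by
    intro v; rw [hmuAv v, ENNReal.toReal_pow, htoReal]
  have hmuInterR : ∀ u v, (μ (Av n u ∩ Av n v)).toReal = (1 - pr) ^ (Tv n u ∪ Tv n v).card := by
    intro u v; rw [Av_inter, cyl hp, ENNReal.toReal_pow, htoReal]
  -- the random variable counting isolated vertices
  set X : (Triple n → Bool) → ℝ := fun ω => ∑ v, (Av n v).indicator (fun _ => (1:ℝ)) ω with hX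
  have hXmeas : Measurable X := fun s _ => measAll _
  have hXbdd : ∀ ω, X ω ∈ Set.Icc (0:ℝ) n := by
    intro ω
    constructor
    · exact Finset.sum_nonneg fun v _ => Set.indicator_nonneg (fun _ _ => zero_le_one) _
    · calc X ω ≤ ∑ _v : Fin n, (1:ℝ) :=
            Finset.sum_le_sum fun v _ =>
              Set.indicator_apply_le' (fun _ => le_refl 1) (fun _ => zero_le_one)
        _ = n := by rw [Finset.sum_const, Finset.card_univ, Fintype.card_fin, nsmul_eq_mul, mul_one]
  have hXmem : MemLp X 2 μ :=
    memLp_of_bounded (Filter.Eventually.of_forall hXbdd) hXmeas.aestronglyMeasurable 2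
  have hint : ∀ v, Integrable ((Av n v).indicator (fun _ => (1:ℝ))) μ :=
    fun v => (integrable_const 1).indicator (measAll _)
  have hEX : μ[X] = a := by
    rw [hX]
    rw [integral_finset_sum _ (fun v _ => hint v)]
    rw [hadef]
    refine Finset.sum_congr rfl fun v _ => ?_
    rw [integral_indicator_const (1:ℝ) (measAll _), smul_eq_mul, mul_one, measureReal_def, hmuAvR]
  have hprod : ∀ (u v : Fin n) (ω : Triple n → Bool),
      (Av n u).indicator (fun _ => (1:ℝ)) ω * (Av n v).indicator (fun _ => (1:ℝ)) ω
      = (Av n u ∩ Av n v).indicator (fun _ => (1:ℝ)) ω := by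
    intro u v ω
    by_cases h1 : ω ∈ Av n u <;> by_cases h2 : ω ∈ Av n v <;>
      simp [Set.indicator_apply, h1, h2, Set.mem_inter_iff]
  have hEX2 : μ[X^2] = ∑ u, ∑ v, (μ (Av n u ∩ Av n v)).toReal := by
    have hXsq : ∀ ω, (X^2) ω = ∑ u, ∑ v, (Av n u ∩ Av n v).indicator (fun _ => (1:ℝ)) ω := by
      intro ω
      rw [Pi.pow_apply, sq, hX, Finset.sum_mul_sum]
      exact Finset.sum_congr rfl fun u _ => Finset.sum_congr rfl fun v _ => hprod u v ω
    rw [show (μ[X^2]) = ∫ ω, ∑ u, ∑ v, (Av n u ∩ Av n v).indicator (fun _ => (1:ℝ)) ω ∂μ from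
      integral_congr_ae (Filter.Eventually.of_forall hXsq)]
    rw [integral_finset_sum _ (fun u _ => integrable_finset_sum _
      (fun v _ => (integrable_const (1:ℝ)).indicator (measAll _)))]
    refine Finset.sum_congr rfl fun u _ => ?_
    rw [integral_finset_sum _ (fun v _ => (integrable_const (1:ℝ)).indicator (measAll _))]
    refine Finset.sum_congr rfl fun v _ => ?_
    rw [integral_indicator_const (1:ℝ) (measAll _), smul_eq_mul, mul_one, measureReal_def]
  have hb_le : ∀ u v : Fin n,
      (μ (Av n u ∩ Av n v)).toReal ≤ (if u = v then q v else 0) + q u * q v / s := by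
    intro u v
    by_cases huv : u = v
    · subst huv
      rw [Set.inter_self, hmuAvR]
      simp only [if_true]
      have : 0 ≤ q u * q u / s := div_nonneg (mul_nonneg (hqpos u).le (hqpos u).le) hspos.le
      linarith
    · rw [hmuInterR u v]
      simp only [huv, if_false, zero_add]
      rw [le_div_iff₀ hspos]
      have hcard : (Tv n u).card + (Tv n v).card ≤ (Tv n u ∪ Tv n v).card + n := by
        have h1 := Finset.card_union_add_card_inter (Tv n u) (Tv n v)
        have h2 := card_Tv_inter_le huv
        omega
      calc (1-pr) ^ (Tv n u ∪ Tv n v).card * s = (1-pr) ^ ((Tv n u ∪ Tv n v).card + n) := by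
            rw [hsdef, pow_add]
        _ ≤ (1-pr) ^ ((Tv n u).card + (Tv n v).card) :=
            pow_le_pow_of_le_one (by linarith) (by linarith) hcard
        _ = q u * q v := by rw [pow_add]
  have hEX2le : μ[X^2] ≤ a + a^2 / s := by
    rw [hEX2]
    calc ∑ u, ∑ v, (μ (Av n u ∩ Av n v)).toReal
        ≤ ∑ u, ∑ v : Fin n, ((if u = v then q v else 0) + q u * q v / s) :=
          Finset.sum_le_sum fun u _ => Finset.sum_le_sum fun v _ => hb_le u v
      _ = (∑ u, ∑ v : Fin n, (if u = v then q v else 0)) + ∑ u, ∑ v : Fin n, q u * q v / s := by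
          rw [← Finset.sum_add_distrib]
          exact Finset.sum_congr rfl fun u _ => Finset.sum_add_distrib
      _ = a + a^2/s := by
          congr 1
          · rw [hadef]
            refine Finset.sum_congr rfl fun u _ => ?_
            simp [Finset.sum_ite_eq]
          · rw [sq, Finset.sum_mul_sum]
            rw [Finset.sum_div]
            exact Finset.sum_congr rfl fun u _ => (Finset.sum_div _ _ _).symm
  have hvar : ProbabilityTheory.variance X μ ≤ a + a^2/s - a^2 := by
    rw [ProbabilityTheory.variance_eq_sub hXmem, hEX]
    have := hEX2le
    linarith
  have hvardiv : ProbabilityTheory.variance X μ / a^2 ≤ ε :=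
    arith_div hapos hspos hvar hainv hfrac
  have hsub : NoIsolated n ⊆ {ω | a ≤ |X ω - μ[X]|} := by
    intro ω hω
    have hX0 : X ω = 0 := by
      rw [hX]
      apply Finset.sum_eq_zero
      intro v _
      apply Set.indicator_of_notMem
      intro hmem
      obtain ⟨e, hve, hωe⟩ := hω v
      have h := hmem e (mem_Tv.2 hve)
      rw [h] at hωe
      exact Bool.false_ne_true hωe
    rw [Set.mem_setOf_eq, hX0, hEX, zero_sub, abs_neg, abs_of_pos hapos]
  have hcheb := ProbabilityTheory.meas_ge_le_variance_div_sq (μ := μ) hXmem hapos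
  calc μ (NoIsolated n) ≤ μ {ω | a ≤ |X ω - μ[X]|} := measure_mono hsub
    _ ≤ ENNReal.ofReal (ProbabilityTheory.variance X μ / a^2) := hcheb
    _ ≤ ENNReal.ofReal ε := ENNReal.ofReal_le_ofReal hvardiv

lemma part1 (ε : ℝ) (hε : 0 < ε) :
    ∃ N : ℕ, ∀ n ≥ N, ∀ (p : ENNReal) (hp : p ≤ 1),
      p ≤ ENNReal.ofReal ((1 - ε) * Real.log n / (2 * (n:ℝ)^2)) →
      hypergraphMeasure n p hp (NoIsolated n) ≤ ENNReal.ofReal ε := by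
  have hε'pos : 0 < min ε (1/2) := lt_min hε (by norm_num)
  obtain ⟨N, hN⟩ := main_est (min ε (1/2)) hε'pos (min_le_right _ _)
  refine ⟨max N 1, fun n hn p hp hple => ?_⟩
  have hn1 : 1 ≤ n := le_trans (le_max_right _ _) hn
  have hnN : n ≥ N := le_trans (le_max_left _ _) hn
  have hnum : (1-ε) * Real.log n ≤ (1 - min ε (1/2)) * Real.log n :=
    mul_le_mul_of_nonneg_right (by linarith [min_le_left ε (1/2)]) (Real.log_natCast_nonneg n)
  have hmono : (1 - ε) * Real.log n / (2*(n:ℝ)^2)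
      ≤ (1 - min ε (1/2)) * Real.log n / (2*(n:ℝ)^2) := by
    have hn0 : (0:ℝ) < n := by exact_mod_cast hn1
    exact div_le_div_of_nonneg_right hnum (by positivity)
  have h := hN n hnN p hp (hple.trans (ENNReal.ofReal_le_ofReal hmono))
  exact h.trans (ENNReal.ofReal_le_ofReal (min_le_left _ _))

/-- The event that the hypergraph contains a loose Hamilton cycle: a cyclic sequence of
present edges `{x i, y i, x (i+1)}`, `i : Fin m`, `n = 2m`, with the `x i, y i` all distinct
and exhausting `[n]`. -/
def HasLooseHamiltonCycle (n : ℕ) : Set (Triple n → Bool) :=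
  {ω | ∃ m : ℕ, ∃ _ : NeZero m, ∃ x y : Fin m → Fin n,
    Function.Injective (Sum.elim x y) ∧
    (∀ v : Fin n, (∃ i, x i = v) ∨ (∃ i, y i = v)) ∧
    (∀ i : Fin m, ∃ e : Triple n, ω e = true ∧ e.1 = {x i, y i, x (i + 1)})}

lemma hlc_subset (n : ℕ) : HasLooseHamiltonCycle n ⊆ NoIsolated n := by
  rintro ω ⟨m, _, x, y, hinj, hcover, hedges⟩ v
  rcases hcover v with ⟨i, rfl⟩ | ⟨i, rfl⟩
  · obtain ⟨e, he, hes⟩ := hedges i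
    exact ⟨e, by rw [hes]; simp, he⟩
  · obtain ⟨e, he, hes⟩ := hedges i
    exact ⟨e, by rw [hes]; simp, he⟩

/-- If `p ≤ (1 - ε) log n / (2 n²)` then `H_{n,p;3}` has an isolated vertex with probability
close to 1: for every `ε > 0` there is `N` so that for all even `n ≥ N` the probability of
having no isolated vertex is at most `ε`.  Consequently, for any such choice `p n` of edge
probabilities, the probability that `H_{n, p n;3}` contains a loose Hamilton cycle tends
to `0` as `n → ∞` along even `n`. -/
theorem prob_looseHamiltonCycle_tendsto_zero_below_threshold :
    (∀ ε : ℝ, 0 < ε → ∃ N : ℕ, ∀ n ≥ N, Even n →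
      ∀ (p : ENNReal) (hp : p ≤ 1),
        p ≤ ENNReal.ofReal ((1 - ε) * Real.log n / (2 * (n : ℝ) ^ 2)) →
        hypergraphMeasure n p hp (NoIsolated n) ≤ ENNReal.ofReal ε) ∧
    (∀ ε : ℝ, 0 < ε → ε < 1 → ∀ (p : ℕ → ENNReal) (hp : ∀ n, p n ≤ 1),
      (∀ n : ℕ, p n ≤ ENNReal.ofReal ((1 - ε) * Real.log n / (2 * (n : ℝ) ^ 2))) →
      Tendsto (fun n => hypergraphMeasure n (p n) (hp n) (HasLooseHamiltonCycle n))
        (atTop ⊓ Filter.principal {n | Even n}) (nhds 0)) := by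
  constructor
  · intro ε hε
    obtain ⟨N, hN⟩ := part1 ε hε
    exact ⟨N, fun n hn _ => hN n hn⟩
  · intro ε hε hε1 p hp hple
    rw [ENNReal.tendsto_nhds_zero]
    intro δ hδ
    have hmin_ne_top : min δ 1 ≠ ⊤ := ((min_le_right δ 1).trans_lt ENNReal.one_lt_top).ne
    have hrpos : 0 < (min δ 1).toReal :=
      ENNReal.toReal_pos (ne_of_gt (lt_min hδ one_pos)) hmin_ne_top
    have hofr : ENNReal.ofReal ((min δ 1).toReal) ≤ δ := by
      rw [ENNReal.ofReal_toReal hmin_ne_top]; exact min_le_left _ _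
    have hε₀pos : 0 < min ε ((min δ 1).toReal) := lt_min hε hrpos
    obtain ⟨N, hN⟩ := part1 (min ε ((min δ 1).toReal)) hε₀pos
    apply Filter.eventually_inf_principal.2
    apply eventually_atTop.2
    refine ⟨max N 1, fun n hn _ => ?_⟩
    have hn1 : 1 ≤ n := le_trans (le_max_right _ _) hn
    have hnN : n ≥ N := le_trans (le_max_left _ _) hn
    have hnum : (1-ε) * Real.log n ≤ (1 - min ε ((min δ 1).toReal)) * Real.log n :=
      mul_le_mul_of_nonneg_right (by linarith [min_le_left ε ((min δ 1).toReal)])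
        (Real.log_natCast_nonneg n)
    have hn0 : (0:ℝ) < n := by exact_mod_cast hn1
    have hmono : (1 - ε) * Real.log n / (2*(n:ℝ)^2)
        ≤ (1 - min ε ((min δ 1).toReal)) * Real.log n / (2*(n:ℝ)^2) :=
      div_le_div_of_nonneg_right hnum (by positivity)
    have h := hN n hnN (p n) (hp n) ((hple n).trans (ENNReal.ofReal_le_ofReal hmono))
    calc hypergraphMeasure n (p n) (hp n) (HasLooseHamiltonCycle n)
        ≤ hypergraphMeasure n (p n) (hp n) (NoIsolated n) := measure_mono (hlc_subset n)
      _ ≤ ENNReal.ofReal (min ε ((min δ 1).toReal)) := h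
      _ ≤ ENNReal.ofReal ((min δ 1).toReal) := ENNReal.ofReal_le_ofReal (min_le_right _ _)
      _ ≤ δ := hofr
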